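/- arXiv:1009.3113 — 8 statements merged into one kernel-verified Lean document; each statement's English description precedes it below -/
import Mathlib

section
/- Let β* = (√17-3)/2. The infinite product identity holds: (4/(β*(2β*+3))) · (Γ(√17+1)/Γ(√17 - β* + 1)) · (1/Γ(β*+2)²) · (1/(1+β*/2)) = Γ(2(β*+1))/(2·Γ(β*+1)³). -/
/-!
Since `√17 = 2β* + 3`, every Gamma value in the identity is an integer shift of `Γ(β* + 1)` or
`Γ(2β* + 2)`. The functional equation `Γ(s + 1) = s Γ(s)` reduces the identity to
`β*(β* + 3) (β* + 1)² (β* + 2)² = 32`, which holds because `β*(β* + 3) = 2` makes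
`(β* + 1)(β* + 2) = β*(β* + 3) + 2 = 4`.
-/

open Real

lemma Real.Gamma_add_two_eq {s : ℝ} (hs : 0 < s) : Gamma (s + 2) = (s + 1) * (s * Gamma s) := by
  rw [show s + 2 = s + 1 + 1 by ring, Gamma_add_one (by positivity), Gamma_add_one hs.ne']

lemma Real.Gamma_add_three_eq {s : ℝ} (hs : 0 < s) :
    Gamma (s + 3) = (s + 2) * ((s + 1) * (s * Gamma s)) := by
  rw [show s + 3 = s + 2 + 1 by ring, Gamma_add_one (by positivity), Gamma_add_two_eq hs]

lemma gamma_identity_of_mul_add_three_eq_two {b : ℝ} (hb : 0 < b) (hb3 : b * (b + 3) = 2) :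
    4 / (b * (2 * b + 3)) * (Gamma (2 * b + 4) / Gamma (b + 4))
        * (1 / Gamma (b + 2) ^ 2) * (1 / (1 + b / 2))
      = Gamma (2 * (b + 1)) / (2 * Gamma (b + 1) ^ 3) := by
  have h2b : Gamma (2 * b + 4) = (2 * b + 3) * ((2 * b + 2) * Gamma (2 * (b + 1))) := by
    rw [show 2 * b + 4 = 2 * (b + 1) + 2 by ring, Gamma_add_two_eq (by positivity)]
    ring
  have hb4 : Gamma (b + 4) = (b + 3) * ((b + 2) * ((b + 1) * Gamma (b + 1))) := by
    rw [show b + 4 = b + 1 + 3 by ring, Gamma_add_three_eq (by positivity)]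
    ring
  have hb2 : Gamma (b + 2) = (b + 1) * Gamma (b + 1) := by
    rw [show b + 2 = b + 1 + 1 by ring, Gamma_add_one (by positivity)]
  have hprod : (b + 1) * (b + 2) = 4 := by linear_combination hb3
  rw [h2b, hb4, hb2]
  field_simp
  linear_combination -((b + 1) * (b + 2)) ^ 2 * hb3 - 2 * ((b + 1) * (b + 2) + 4) * hprod

/-- For β* = (√17-3)/2:
(4/(β*(2β*+3))) · (Γ(√17+1)/Γ(√17 - β* + 1)) · (1/Γ(β*+2)²) · (1/(1+β*/2))
  = Γ(2(β*+1))/(2·Γ(β*+1)³). -/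
theorem stmt4 :
    (4 / (((Real.sqrt 17 - 3) / 2) * (2 * ((Real.sqrt 17 - 3) / 2) + 3)))
      * (Real.Gamma (Real.sqrt 17 + 1) / Real.Gamma (Real.sqrt 17 - (Real.sqrt 17 - 3) / 2 + 1))
      * (1 / Real.Gamma ((Real.sqrt 17 - 3) / 2 + 2) ^ 2)
      * (1 / (1 + ((Real.sqrt 17 - 3) / 2) / 2))
    = Real.Gamma (2 * ((Real.sqrt 17 - 3) / 2 + 1))
        / (2 * Real.Gamma ((Real.sqrt 17 - 3) / 2 + 1) ^ 3) := by
  have hsq : √17 ^ 2 = 17 := sq_sqrt (by norm_num)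
  have h3 : 3 < √17 := by nlinarith [sqrt_nonneg 17]
  set b := (√17 - 3) / 2 with hb
  have hs : √17 = 2 * b + 3 := by rw [hb]; ring
  have hb3 : b * (b + 3) = 2 := by nlinarith
  rw [hs, show 2 * b + 3 + 1 = 2 * b + 4 by ring, show 2 * b + 3 - b + 1 = b + 4 by ring]
  exact gamma_identity_of_mul_add_three_eq_two (by rw [hb]; linarith) hb3
end

section
/- The probability that M₀(x) < x ∧ (1-x), where M₀(x) has the law described by the density ∫-representation, equals -(x ∧ (1-x))·ln(x(1-x)) for x ∈ (0,1), and this quantity lies in (0,1). -/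
open MeasureTheory intervalIntegral

/-! On the range of integration of either integral the cap `min x (1 - x)` is the smaller
argument of the outer `min`, so each integrand is `min x (1 - x)` times `1 / y` (resp. `1 / (1 - y)`)
and integrates to a logarithm; the two logarithms add up to `log (x (1 - x))`. For the bound,
`m = min x (1 - x) ≤ 1 / 2` satisfies `m (1 - m) = x (1 - x)`, and `log t ≤ t - 1` at `t = 1 / m`
and `t = 1 / (1 - m)` gives `-m log m < 1 - m` and `-m log (1 - m) ≤ m² / (1 - m) ≤ m`. -/

lemma integral_min_div_div_self {a m : ℝ} (ha : 0 < a) (ha1 : a ≤ 1) (hm : m ≤ a) :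
    ∫ y in a..1, min (a / y) m / y = -m * Real.log a := by
  have hcongr : Set.EqOn (fun y => min (a / y) m / y) (fun y => m * (1 / y)) (Set.uIcc a 1) := by
    intro y hy
    rw [Set.uIcc_of_le ha1] at hy
    have hy0 : 0 < y := ha.trans_le hy.1
    have hmy : m ≤ a / y := hm.trans (le_div_self ha.le hy0 hy.2)
    simp only [min_eq_right hmy, mul_one_div]
  have hzero : (0 : ℝ) ∉ Set.uIcc a 1 := by
    rw [Set.uIcc_of_le ha1]
    exact fun h => ha.not_ge h.1
  rw [integral_congr hcongr, intervalIntegral.integral_const_mul, integral_one_div hzero, one_div, Real.log_inv]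
  ring

lemma integral_min_div_one_sub {a m : ℝ} (ha : a < 1) (ha0 : 0 ≤ a) (hm : m ≤ 1 - a) :
    ∫ y in (0 : ℝ)..a, min ((1 - a) / (1 - y)) m / (1 - y) = -m * Real.log (1 - a) := by
  rw [integral_comp_sub_left (fun u => min ((1 - a) / u) m / u), sub_zero]
  exact integral_min_div_div_self (by linarith) (by linarith) hm

lemma min_mul_one_sub_min (x : ℝ) : min x (1 - x) * (1 - min x (1 - x)) = x * (1 - x) := by
  rcases le_total x (1 - x) with h | h
  · rw [min_eq_left h]
  · rw [min_eq_right h]; ring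

lemma neg_mul_log_mul_one_sub_mem_Ioo {m : ℝ} (hm0 : 0 < m) (hm : m ≤ 1 / 2) :
    -m * Real.log (m * (1 - m)) ∈ Set.Ioo (0 : ℝ) 1 := by
  have h1m : 0 < 1 - m := by linarith
  have hlog_m : -m * Real.log m < 1 - m := by
    have h := Real.log_lt_sub_one_of_pos (inv_pos.2 hm0) (by
      rw [Ne, inv_eq_one]; intro h; linarith)
    rw [Real.log_inv] at h
    have hinv : m * (m⁻¹ - 1) = 1 - m := by field_simp
    nlinarith [mul_lt_mul_of_pos_left h hm0]
  have hlog_one_sub : -m * Real.log (1 - m) ≤ m := by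
    have h := Real.log_le_sub_one_of_pos (inv_pos.2 h1m)
    rw [Real.log_inv] at h
    have hinv : (1 - m) * ((1 - m)⁻¹ - 1) = m := by field_simp; ring
    nlinarith [mul_le_mul_of_nonneg_left h (mul_pos hm0 h1m).le]
  have hneg : Real.log (m * (1 - m)) < 0 := Real.log_neg (by positivity) (by nlinarith)
  constructor
  · nlinarith
  · rw [Real.log_mul hm0.ne' h1m.ne']
    linarith

/-- For x ∈ (0,1), the probability that M₀(x) < x ∧ (1-x), computed from the joint
density g(m,y) = (1/y)·1_{y>x, 0<m<x/y} + (1/(1-y))·1_{y<x, 0<m<(1-x)/(1-y)},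
equals -(x ∧ (1-x))·ln(x(1-x)), and this quantity lies in (0,1). -/
theorem stmt8 (x : ℝ) (hx : x ∈ Set.Ioo (0:ℝ) 1) :
    ((∫ y in x..1, min (x / y) (min x (1 - x)) / y)
        + ∫ y in (0:ℝ)..x, min ((1 - x) / (1 - y)) (min x (1 - x)) / (1 - y))
      = -(min x (1 - x)) * Real.log (x * (1 - x))
    ∧ (-(min x (1 - x)) * Real.log (x * (1 - x))) ∈ Set.Ioo (0:ℝ) 1 := by
  obtain ⟨hx0, hx1⟩ := hx
  constructor
  · rw [integral_min_div_div_self hx0 hx1.le (min_le_left _ _),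
      integral_min_div_one_sub hx1 hx0.le (min_le_right _ _),
      Real.log_mul hx0.ne' (sub_pos.2 hx1).ne']
    ring
  · rw [← min_mul_one_sub_min]
    exact neg_mul_log_mul_one_sub_mem_Ioo (lt_min hx0 (sub_pos.2 hx1))
      (by linarith [min_le_left x (1 - x), min_le_right x (1 - x)])
end

section
/- Define the Markov transition kernel on (0,1) ∪ {∂} by p(x, dy) = (x ∧ (1-x))·δ_∂ + [((1-x)/(1-y)²)·1_{y∈(0,x)} + (x/y²)·1_{y∈(x,1)} - (x ∧ (1-x))] dy for x ∈ (0,1) and p(∂,·) = δ_∂, and define V(x) = 1_{x=∂} + (10/√x)·1_{x∈(0,1/2)} + (10/√(1-x))·1_{x∈[1/2,1)}. Then for every x ∈ (0,1) ∪ {∂}, ∫ p(x,dy) V(y) ≤ 0.85·V(x) + 1_{∂}(x). -/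
/-!
For `x ≤ 1/2` the integral splits at `x` and `1/2`. On `(x, 1/2)` the integrand
`(x/y² - x)·10/√y` has an elementary primitive. On `(0, x)`, and on `(1/2, 1)` after `y ↦ 1 - y`,
the integrand has the form `(c/(1-y)² - d)·10/√y`; bounding `(1-y)⁻²` on `[0, 1/2]` by a
polynomial makes it explicitly integrable too. Multiplied by `√x`, the drift inequality becomes a
polynomial inequality in `√x` on `[0, 1/√2]`, which holds with a margin of about `0.15`. The case
`x > 1/2` follows from the invariance of the kernel and of `V` under `(x, y) ↦ (1 - x, 1 - y)`.
-/

open MeasureTheory intervalIntegral Set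

noncomputable section

def kernelDensity (x y : ℝ) : ℝ :=
  (if y < x then (1 - x) / (1 - y) ^ 2 else 0) + (if x < y then x / y ^ 2 else 0) - min x (1 - x)

def potential (y : ℝ) : ℝ := if y < 1/2 then 10 / √y else 10 / √(1 - y)

/-- The Taylor polynomial `∑_{k<5} (k+1) yᵏ` of `(1 - y)⁻²`, with the `y⁵` coefficient raised from
`6` to `14` so that it dominates `(1 - y)⁻²` on the whole of `[0, 1/2]`. -/
def majorant (y : ℝ) : ℝ := 1 + 2*y + 3*y^2 + 4*y^3 + 5*y^4 + 14*y^5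

def majorantPrimitive (z : ℝ) : ℝ :=
  2 + (4/3)*z + (6/5)*z^2 + (8/7)*z^3 + (10/9)*z^4 + (28/11)*z^5

end

lemma potential_of_le_half {x : ℝ} (h : x ≤ 1/2) : potential x = 10 / √x := by
  rcases h.lt_or_eq with h | rfl
  · exact if_pos h
  · norm_num [potential]

lemma potential_one_sub (y : ℝ) : potential (1 - y) = potential y := by
  unfold potential
  rcases lt_trichotomy y (1/2) with h | rfl | h
  · rw [if_neg (by linarith), if_pos h, sub_sub_cancel]
  · norm_num
  · rw [if_pos (by linarith), if_neg (by linarith)]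

lemma kernelDensity_one_sub (x y : ℝ) : kernelDensity (1 - x) (1 - y) = kernelDensity x y := by
  simp only [kernelDensity, sub_lt_sub_iff_left, sub_sub_cancel, min_comm (1 - x) x]
  ring

lemma integral_kernelDensity_one_sub_mul_potential (x : ℝ) :
    ∫ y in 0..1, kernelDensity (1 - x) y * potential y
      = ∫ y in 0..1, kernelDensity x y * potential y := by
  have := integral_comp_sub_left (a := 0) (b := 1)
    (fun y => kernelDensity (1 - x) y * potential y) 1
  simp only [kernelDensity_one_sub, potential_one_sub, sub_zero, sub_self] at this
  exact this.symm

lemma one_div_one_sub_sq_le_majorant {y : ℝ} (h0 : 0 ≤ y) (h1 : y ≤ 1/2) :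
    1 / (1 - y) ^ 2 ≤ majorant y := by
  rw [div_le_iff₀ (by nlinarith), majorant]
  nlinarith [mul_nonneg (mul_nonneg (pow_nonneg h0 5) (sub_nonneg.2 h1))
    (sub_nonneg.2 (show y ≤ 8/7 by linarith))]

lemma exists_pos_eq_sq {y : ℝ} (hy : 0 < y) : ∃ s, 0 < s ∧ y = s ^ 2 :=
  ⟨√y, Real.sqrt_pos.2 hy, (Real.sq_sqrt hy.le).symm⟩

lemma hasDerivAt_majorantPrimitive_mul_sqrt {y : ℝ} (hy : 0 < y) :
    HasDerivAt (fun z => majorantPrimitive z * √z) (majorant y / √y) y := by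
  have hR : HasDerivAt majorantPrimitive
      (4/3 + (12/5)*y + (24/7)*y^2 + (40/9)*y^3 + (140/11)*y^4) y := by
    have := (((((hasDerivAt_const y (2:ℝ)).add ((hasDerivAt_id' y).const_mul (4/3:ℝ))).add
      ((hasDerivAt_pow 2 y).const_mul (6/5:ℝ))).add
      ((hasDerivAt_pow 3 y).const_mul (8/7:ℝ))).add
      ((hasDerivAt_pow 4 y).const_mul (10/9:ℝ))).add
      ((hasDerivAt_pow 5 y).const_mul (28/11:ℝ))
    exact this.congr_deriv (by push_cast; ring)
  refine (hR.mul (Real.hasDerivAt_sqrt hy.ne')).congr_deriv ?_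
  obtain ⟨s, hs, rfl⟩ := exists_pos_eq_sq hy
  rw [Real.sqrt_sq hs.le, majorant, majorantPrimitive]
  field_simp
  ring

lemma intervalIntegrable_div_sqrt (k : ℝ) {b : ℝ} (hb : 0 ≤ b) :
    IntervalIntegrable (fun y => k / √y) volume 0 b := by
  refine ((intervalIntegrable_rpow' (r := -1/2) (by norm_num)).const_mul k).congr_uIoo ?_
  intro y hy
  rw [uIoo_of_le hb] at hy
  simp only [Real.sqrt_eq_rpow, div_eq_mul_inv, ← Real.rpow_neg hy.1.le]
  norm_num

lemma intervalIntegrable_div_one_sub_sq_sub_mul_div_sqrt (c d : ℝ) {a : ℝ} (h0 : 0 ≤ a)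
    (h1 : a < 1) :
    IntervalIntegrable (fun y => (c / (1 - y) ^ 2 - d) * (10 / √y)) volume 0 a := by
  refine (intervalIntegrable_div_sqrt 10 h0).continuousOn_mul fun y hy => ?_
  rw [uIcc_of_le h0] at hy
  have : (1 - y) ^ 2 ≠ 0 := by nlinarith [hy.2]
  exact ContinuousAt.continuousWithinAt (by fun_prop (disch := assumption))

lemma integral_div_one_sub_sq_sub_mul_div_sqrt_le (c d : ℝ) {a : ℝ} (hc : 0 ≤ c) (h0 : 0 ≤ a)
    (h1 : a ≤ 1/2) :
    ∫ y in 0..a, (c / (1 - y) ^ 2 - d) * (10 / √y)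
      ≤ 10 * (c * majorantPrimitive a - 2 * d) * √a := by
  have hmaj : IntervalIntegrable (fun y => (c * majorant y - d) * (10 / √y)) volume 0 a :=
    (intervalIntegrable_div_sqrt 10 h0).continuousOn_mul (by unfold majorant; fun_prop)
  calc ∫ y in 0..a, (c / (1 - y) ^ 2 - d) * (10 / √y)
      ≤ ∫ y in 0..a, (c * majorant y - d) * (10 / √y) := by
        refine integral_mono_on h0
          (intervalIntegrable_div_one_sub_sq_sub_mul_div_sqrt c d h0 (by linarith)) hmaj
          fun y ⟨hy0, hy1⟩ => mul_le_mul_of_nonneg_right ?_ (by positivity)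
        have := mul_le_mul_of_nonneg_left (one_div_one_sub_sq_le_majorant hy0 (hy1.trans h1)) hc
        rw [mul_one_div] at this
        linarith
    _ = 10 * (c * (majorantPrimitive a * √a) - 2 * d * √a)
          - 10 * (c * (majorantPrimitive 0 * √0) - 2 * d * √0) := by
        refine integral_eq_sub_of_hasDeriv_right_of_le
          (f := fun z => 10 * (c * (majorantPrimitive z * √z) - 2 * d * √z)) h0
          (by unfold majorantPrimitive; fun_prop) (fun y hy => ?_) hmaj
        have hy : 0 < y := hy.1
        have hsq := Real.hasDerivAt_sqrt hy.ne'
        have := (((hasDerivAt_majorantPrimitive_mul_sqrt hy).const_mul c).sub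
          (hsq.const_mul (2 * d))).const_mul 10
        refine (this.congr_deriv ?_).hasDerivWithinAt
        have : √y ≠ 0 := (Real.sqrt_pos.2 hy).ne'
        field_simp
    _ = 10 * (c * majorantPrimitive a - 2 * d) * √a := by simp; ring

lemma intervalIntegrable_div_sq_sub_mul_div_sqrt (c d : ℝ) {a b : ℝ} (ha : 0 < a) (hab : a ≤ b) :
    IntervalIntegrable (fun y => (c / y ^ 2 - d) * (10 / √y)) volume a b := by
  refine ContinuousOn.intervalIntegrable fun y hy => ?_
  rw [uIcc_of_le hab] at hy
  have hy : 0 < y := ha.trans_le hy.1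
  have : √y ≠ 0 := (Real.sqrt_pos.2 hy).ne'
  exact ContinuousAt.continuousWithinAt (by fun_prop (disch := positivity))

lemma integral_div_sq_sub_mul_div_sqrt (c d : ℝ) {a b : ℝ} (ha : 0 < a) (hab : a ≤ b) :
    ∫ y in a..b, (c / y ^ 2 - d) * (10 / √y)
      = 20 * c / 3 * (1 / (a * √a) - 1 / (b * √b)) - 20 * d * (√b - √a) := by
  have hpos : ∀ y ∈ uIcc a b, 0 < y := fun y hy =>
    ha.trans_le (by rw [uIcc_of_le hab] at hy; exact hy.1)
  have hderiv : ∀ y ∈ uIcc a b, HasDerivAt (fun z => -(20 * c / 3) / (z * √z) - 20 * d * √z)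
      ((c / y ^ 2 - d) * (10 / √y)) y := by
    intro y hy
    have hy := hpos y hy
    have hsq := Real.hasDerivAt_sqrt hy.ne'
    refine (((hasDerivAt_const y (-(20 * c / 3))).div ((hasDerivAt_id' y).mul hsq)
      (mul_pos hy (Real.sqrt_pos.2 hy)).ne').sub
      (hsq.const_mul (20 * d))).congr_deriv ?_
    obtain ⟨s, hs, rfl⟩ := exists_pos_eq_sq hy
    simp only [Pi.mul_apply, Real.sqrt_sq hs.le]
    field_simp
    ring
  rw [integral_eq_sub_of_hasDerivAt hderiv (intervalIntegrable_div_sq_sub_mul_div_sqrt c d ha hab)]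
  ring

-- `24.099 < 47237/1386 · √(1/2)`, the coefficient of `x^{3/2}` collected in `drift_majorant_le`.
lemma drift_polynomial_le {s : ℝ} (hs : 0 ≤ s) (hs2 : s ^ 2 ≤ 1/2) :
    s ^ 3 + 10 * (1 - s ^ 2) * majorantPrimitive (s ^ 2) * s ^ 2 - 24.099 * s ^ 3 ≤ 11/6 := by
  have hx : 0 ≤ s ^ 2 := sq_nonneg s
  have hR : majorantPrimitive (s ^ 2) ≤ 2 + 4/3 * s ^ 2 + 2.37 * (s ^ 2) ^ 2 := by
    unfold majorantPrimitive
    nlinarith [mul_nonneg (pow_nonneg hx 2) (sub_nonneg.2 hs2),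
      mul_nonneg (pow_nonneg hx 3) (sub_nonneg.2 hs2),
      mul_nonneg (pow_nonneg hx 4) (sub_nonneg.2 hs2),
      pow_nonneg hx 3, pow_nonneg hx 4]
  have h1 : 0 ≤ (1 - s ^ 2) * s ^ 2 := mul_nonneg (by linarith) hx
  nlinarith [mul_le_mul_of_nonneg_left hR h1, mul_nonneg hs (sq_nonneg (s - 0.5)),
    sq_nonneg (s - 0.5), sq_nonneg (s ^ 2 - 0.25), mul_nonneg (sub_nonneg.2 hs2) (pow_nonneg hs 4),
    pow_nonneg hs 3, mul_nonneg (sub_nonneg.2 hs2) (pow_nonneg hs 2)]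

lemma drift_majorant_le {x : ℝ} (hx0 : 0 < x) (hx : x ≤ 1/2) :
    x + (10 * ((1 - x) * majorantPrimitive x - 2 * x) * √x
      + (20 * x / 3 * (1 / (x * √x) - 1 / (1/2 * √(1/2))) - 20 * x * (√(1/2) - √x))
      + 10 * (x * majorantPrimitive (1/2) - 2 * x) * √(1/2)) ≤ 0.85 * (10 / √x) := by
  obtain ⟨s, hs, rfl⟩ := exists_pos_eq_sq hx0
  set r := √(1/2 : ℝ)
  have hr2 : r ^ 2 = 1/2 := Real.sq_sqrt (by norm_num)
  have hr0 : 0 < r := by positivity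
  have hr_inv : 1 / (1/2 * r) = 4 * r := by field_simp; nlinarith
  have hr_lb : (0.707106 : ℝ) ≤ r := Real.le_sqrt_of_sq_le (by norm_num)
  have hR : majorantPrimitive (1/2) = 45163 / 13860 := by norm_num [majorantPrimitive]
  rw [Real.sqrt_sq hs.le, hr_inv, hR, show (0.85 : ℝ) * (10 / s) = 8.5 / s by ring, le_div_iff₀ hs]
  have expand : (s ^ 2 + (10 * ((1 - s ^ 2) * majorantPrimitive (s ^ 2) - 2 * s ^ 2) * s
      + (20 * s ^ 2 / 3 * (1 / (s ^ 2 * s) - 4 * r) - 20 * s ^ 2 * (r - s))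
      + 10 * (s ^ 2 * (45163 / 13860) - 2 * s ^ 2) * r)) * s
      = s ^ 3 + 10 * (1 - s ^ 2) * majorantPrimitive (s ^ 2) * s ^ 2 + 20 / 3
        - 47237 / 1386 * r * s ^ 3 := by
    field_simp
    ring
  rw [expand]
  have := drift_polynomial_le hs.le hx
  nlinarith [pow_pos hs 3]

lemma kernelDensity_mul_potential_eqOn_Ioo_zero {x : ℝ} (hx : x ≤ 1/2) :
    EqOn (fun y => kernelDensity x y * potential y)
      (fun y => ((1 - x) / (1 - y) ^ 2 - x) * (10 / √y)) (Ioo 0 x) := by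
  intro y ⟨_, hyx⟩
  simp only [kernelDensity, if_pos hyx, if_neg hyx.not_gt, min_eq_left (by linarith : x ≤ 1 - x),
    potential_of_le_half (hyx.le.trans hx)]
  ring

lemma kernelDensity_mul_potential_eqOn_Ioo_half (x : ℝ) :
    EqOn (fun y => kernelDensity x y * potential y)
      (fun y => (x / y ^ 2 - x) * (10 / √y)) (Ioo x (1/2)) := by
  intro y ⟨hxy, hy⟩
  simp only [kernelDensity, if_pos hxy, if_neg hxy.not_gt, min_eq_left (by linarith : x ≤ 1 - x),
    potential_of_le_half hy.le]
  ring

lemma kernelDensity_mul_potential_one_sub_eqOn {x : ℝ} (hx : x ≤ 1/2) :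
    EqOn (fun u => kernelDensity x (1 - u) * potential (1 - u))
      (fun u => (x / (1 - u) ^ 2 - x) * (10 / √u)) (Ioo 0 (1/2)) := by
  intro u ⟨_, hu⟩
  have hxu : x < 1 - u := by linarith
  dsimp only
  rw [potential_one_sub, potential_of_le_half hu.le]
  simp only [kernelDensity, if_pos hxu, if_neg hxu.not_gt, min_eq_left (by linarith : x ≤ 1 - x)]
  ring

lemma drift_le_of_le_half {x : ℝ} (hx0 : 0 < x) (hx : x ≤ 1/2) :
    min x (1 - x) + ∫ y in 0..1, kernelDensity x y * potential y ≤ 0.85 * potential x := by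
  set g := fun y => kernelDensity x y * potential y
  have e1 := kernelDensity_mul_potential_eqOn_Ioo_zero hx
  have e2 := kernelDensity_mul_potential_eqOn_Ioo_half x
  have e3 := kernelDensity_mul_potential_one_sub_eqOn hx
  have i1 : IntervalIntegrable g volume 0 x :=
    (intervalIntegrable_div_one_sub_sq_sub_mul_div_sqrt (1 - x) x hx0.le (by linarith)).congr_uIoo
      (uIoo_of_le hx0.le ▸ e1.symm)
  have i2 : IntervalIntegrable g volume x (1/2) :=
    (intervalIntegrable_div_sq_sub_mul_div_sqrt x x hx0 hx).congr_uIoo (uIoo_of_le hx ▸ e2.symm)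
  have i3 : IntervalIntegrable g volume (1/2) 1 := by
    have h := ((intervalIntegrable_div_one_sub_sq_sub_mul_div_sqrt x x (by norm_num)
      (by norm_num)).congr_uIoo (uIoo_of_le (by norm_num : (0:ℝ) ≤ 1/2) ▸ e3.symm)).comp_sub_left 1
    norm_num at h
    exact h.symm
  have reflect : ∫ y in (1/2)..1, g y = ∫ u in 0..(1/2), g (1 - u) := by
    rw [integral_comp_sub_left g 1]; norm_num
  have p1 : ∫ y in 0..x, g y ≤ 10 * ((1 - x) * majorantPrimitive x - 2 * x) * √x := by
    rw [integral_congr_Ioo_of_le hx0.le e1]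
    exact integral_div_one_sub_sq_sub_mul_div_sqrt_le _ _ (by linarith) hx0.le hx
  have p2 : ∫ y in x..(1/2), g y
      = 20 * x / 3 * (1 / (x * √x) - 1 / (1/2 * √(1/2))) - 20 * x * (√(1/2) - √x) := by
    rw [integral_congr_Ioo_of_le hx e2]
    exact integral_div_sq_sub_mul_div_sqrt x x hx0 hx
  have p3 : ∫ y in (1/2)..1, g y ≤ 10 * (x * majorantPrimitive (1/2) - 2 * x) * √(1/2) := by
    rw [reflect, integral_congr_Ioo_of_le (by norm_num) e3]
    exact integral_div_one_sub_sq_sub_mul_div_sqrt_le _ _ hx0.le (by norm_num) le_rfl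
  rw [← integral_add_adjacent_intervals (i1.trans i2) i3, ← integral_add_adjacent_intervals i1 i2,
    potential_of_le_half hx, min_eq_left (by linarith)]
  linarith [drift_majorant_le hx0 hx]

lemma drift_le {x : ℝ} (hx : x ∈ Ioo 0 1) :
    min x (1 - x) + ∫ y in 0..1, kernelDensity x y * potential y ≤ 0.85 * potential x := by
  rcases le_or_gt x (1/2) with h | h
  · exact drift_le_of_le_half hx.1 h
  · have := drift_le_of_le_half (x := 1 - x) (by linarith [hx.2]) (by linarith)
    rwa [sub_sub_cancel, min_comm, integral_kernelDensity_one_sub_mul_potential,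
      potential_one_sub] at this

/-- Drift condition for the killed Markov chain: with the kernel
p(x,dy) = (x∧(1-x))·δ_∂ + [((1-x)/(1-y)²)·1_{y∈(0,x)} + (x/y²)·1_{y∈(x,1)} - (x∧(1-x))] dy
on (0,1) ∪ {∂} (∂ encoded as `none`, p(∂,·) = δ_∂), and the potential
V(∂) = 1, V(x) = (10/√x)·1_{x∈(0,1/2)} + (10/√(1-x))·1_{x∈[1/2,1)},
one has ∫ p(x,dy) V(y) ≤ 0.85·V(x) + 1_{∂}(x) for every x ∈ (0,1) ∪ {∂}. -/
theorem stmt9 (V : Option ℝ → ℝ)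
    (hVd : V none = 1)
    (hV1 : ∀ y ∈ Set.Ioo (0:ℝ) (1/2), V (some y) = 10 / Real.sqrt y)
    (hV2 : ∀ y ∈ Set.Ico (1/2:ℝ) 1, V (some y) = 10 / Real.sqrt (1 - y)) :
    (∀ x ∈ Set.Ioo (0:ℝ) 1,
      (min x (1 - x)) * V none
        + (∫ y in (0:ℝ)..1,
            ((if y < x then (1 - x) / (1 - y) ^ 2 else 0)
              + (if x < y then x / y ^ 2 else 0) - min x (1 - x)) * V (some y))
      ≤ 0.85 * V (some x))
    ∧ V none ≤ 0.85 * V none + 1 := by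
  have hV : ∀ y ∈ Ioo 0 1, V (some y) = potential y := fun y ⟨hy0, hy1⟩ => by
    rcases lt_or_ge y (1/2) with h | h
    · rw [hV1 y ⟨hy0, h⟩, potential, if_pos h]
    · rw [hV2 y ⟨h, hy1⟩, potential, if_neg h.not_gt]
  refine ⟨fun x hx => ?_, by rw [hVd]; norm_num⟩
  rw [hVd, mul_one, hV x hx,
    integral_congr_Ioo_of_le (g := fun y => kernelDensity x y * potential y) zero_le_one
      fun y hy => by simp only [kernelDensity, hV y hy]]
  exact drift_le hx
end

section
/- For β* = (√17-3)/2, the function p₀(x) = (x(1-x))^{β*/2} satisfies the integral equation p₀(x) = (2/(β*+1)) · [x^{β*+1} ∫ₓ¹ p₀(y)/y^{β*+2} dy + (1-x)^{β*+1} ∫₀ˣ p₀(y)/(1-y)^{β*+2} dy] for all x ∈ (0,1). -/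
/-!
For every `b ≥ 0` the function `p(x) = (x(1-x))^(b/2)` is an eigenfunction of the operator `G`:
both integrals have explicit antiderivatives, `-y^(-b/2-1) (1-y)^(b/2+1) / (b/2+1)` and its mirror
image under `y ↦ 1 - y`, and the two boundary terms recombine into `(x(1-x))^(b/2) ((1-x) + x)`.
The eigenvalue is `4 / ((b+1)(b+2))`, which equals `1` exactly when `b² + 3b = 2`.
-/

open MeasureTheory intervalIntegral

lemma hasDerivAt_neg_rpow_mul_one_sub_rpow_div {b y : ℝ} (hb : 0 ≤ b) (hy0 : 0 < y)
    (hy1 : y ≤ 1) :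
    HasDerivAt (fun t ↦ -(t ^ (-(b / 2) - 1) * (1 - t) ^ (b / 2 + 1)) / (b / 2 + 1))
      ((y * (1 - y)) ^ (b / 2) / y ^ (b + 2)) y := by
  have h1y : 0 ≤ 1 - y := by linarith
  have hpow : HasDerivAt (fun t ↦ t ^ (-(b / 2) - 1))
      ((-(b / 2) - 1) * y ^ (-(b / 2) - 1 - 1)) y :=
    Real.hasDerivAt_rpow_const (Or.inl hy0.ne')
  have hpow' : HasDerivAt (fun t ↦ (1 - t) ^ (b / 2 + 1))
      (-1 * (b / 2 + 1) * (1 - y) ^ (b / 2 + 1 - 1)) y :=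
    ((hasDerivAt_id y).const_sub 1).rpow_const (Or.inr (by linarith))
  refine (((hpow.mul hpow').neg).div_const (b / 2 + 1)).congr_deriv ?_
  have hy : y ^ (-(b / 2) - 1) = y ^ (-(b / 2) - 2) * y := by
    rw [← Real.rpow_add_one hy0.ne']; ring_nf
  have h1y' : (1 - y) ^ (b / 2 + 1) = (1 - y) ^ (b / 2) * (1 - y) := by
    rw [Real.rpow_add' h1y (by positivity), Real.rpow_one]
  have hlhs : (y * (1 - y)) ^ (b / 2) / y ^ (b + 2) = y ^ (-(b / 2) - 2) * (1 - y) ^ (b / 2) := by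
    rw [Real.mul_rpow hy0.le h1y, mul_div_right_comm, ← Real.rpow_sub hy0]
    ring_nf
  rw [hlhs, show -(b / 2) - 1 - 1 = -(b / 2) - 2 by ring, add_sub_cancel_right, hy, h1y']
  field_simp
  ring

lemma integral_rpow_mul_one_sub_rpow_div_rpow {b x : ℝ} (hb : 0 ≤ b) (hx0 : 0 < x)
    (hx1 : x ≤ 1) :
    ∫ y in x..1, (y * (1 - y)) ^ (b / 2) / y ^ (b + 2)
      = x ^ (-(b / 2) - 1) * (1 - x) ^ (b / 2 + 1) / (b / 2 + 1) := by
  have hIcc : ∀ y ∈ Set.uIcc x 1, 0 < y ∧ y ≤ 1 := fun y hy ↦ by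
    rw [Set.uIcc_of_le hx1] at hy
    exact ⟨hx0.trans_le hy.1, hy.2⟩
  have hint : IntervalIntegrable (fun y ↦ (y * (1 - y)) ^ (b / 2) / y ^ (b + 2)) volume x 1 := by
    refine ContinuousOn.intervalIntegrable fun y hy ↦ ?_
    have hy0 := (hIcc y hy).1
    exact ((((continuousAt_id.mul (continuousAt_const.sub continuousAt_id)).rpow_const
      (Or.inr (by positivity))).div (continuousAt_id.rpow_const (Or.inl hy0.ne'))
      (Real.rpow_pos_of_pos hy0 _).ne')).continuousWithinAt
  rw [integral_eq_sub_of_hasDerivAt (fun y hy ↦ hasDerivAt_neg_rpow_mul_one_sub_rpow_div hb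
    (hIcc y hy).1 (hIcc y hy).2) hint, sub_self, Real.zero_rpow (by positivity)]
  ring

lemma integral_rpow_mul_one_sub_rpow_div_one_sub_rpow {b x : ℝ} (hb : 0 ≤ b) (hx0 : 0 ≤ x)
    (hx1 : x < 1) :
    ∫ y in (0:ℝ)..x, (y * (1 - y)) ^ (b / 2) / (1 - y) ^ (b + 2)
      = (1 - x) ^ (-(b / 2) - 1) * x ^ (b / 2 + 1) / (b / 2 + 1) := by
  have h := integral_comp_sub_left (a := 0) (b := x)
    (fun y ↦ (y * (1 - y)) ^ (b / 2) / y ^ (b + 2)) 1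
  simp only [sub_sub_cancel, sub_zero, mul_comm (1 - _ : ℝ)] at h
  rw [h, integral_rpow_mul_one_sub_rpow_div_rpow hb (by linarith) (by linarith), sub_sub_cancel]

lemma rpow_add_one_mul_integral_add_rpow_add_one_mul_integral {b x : ℝ} (hb : 0 ≤ b)
    (hx0 : 0 < x) (hx1 : x < 1) :
    x ^ (b + 1) * (∫ y in x..1, (y * (1 - y)) ^ (b / 2) / y ^ (b + 2))
      + (1 - x) ^ (b + 1) * (∫ y in (0:ℝ)..x, (y * (1 - y)) ^ (b / 2) / (1 - y) ^ (b + 2))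
      = (x * (1 - x)) ^ (b / 2) / (b / 2 + 1) := by
  have h1x : 0 < 1 - x := by linarith
  have hsplit : ∀ {t : ℝ}, 0 < t →
      t ^ (b + 1) * t ^ (-(b / 2) - 1) = t ^ (b / 2) ∧ t ^ (b / 2 + 1) = t ^ (b / 2) * t :=
    fun ht ↦ ⟨by rw [← Real.rpow_add ht]; ring_nf, Real.rpow_add_one ht.ne' _⟩
  rw [integral_rpow_mul_one_sub_rpow_div_rpow hb hx0 hx1.le,
    integral_rpow_mul_one_sub_rpow_div_one_sub_rpow hb hx0.le hx1, Real.mul_rpow hx0.le h1x.le]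
  calc x ^ (b + 1) * (x ^ (-(b / 2) - 1) * (1 - x) ^ (b / 2 + 1) / (b / 2 + 1))
        + (1 - x) ^ (b + 1) * ((1 - x) ^ (-(b / 2) - 1) * x ^ (b / 2 + 1) / (b / 2 + 1))
      = (x ^ (b + 1) * x ^ (-(b / 2) - 1)) * (1 - x) ^ (b / 2 + 1) / (b / 2 + 1)
        + ((1 - x) ^ (b + 1) * (1 - x) ^ (-(b / 2) - 1)) * x ^ (b / 2 + 1) / (b / 2 + 1) := by
        ring
    _ = x ^ (b / 2) * (1 - x) ^ (b / 2) * ((1 - x) + x) / (b / 2 + 1) := by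
        rw [(hsplit hx0).1, (hsplit hx0).2, (hsplit h1x).1, (hsplit h1x).2]
        ring
    _ = x ^ (b / 2) * (1 - x) ^ (b / 2) / (b / 2 + 1) := by
        rw [sub_add_cancel, mul_one]

lemma sqrt_seventeen_sub_three_div_two_add_one_mul_div_two_add_one :
    ((Real.sqrt 17 - 3) / 2 + 1) * ((Real.sqrt 17 - 3) / 2 / 2 + 1) = 2 := by
  linear_combination Real.sq_sqrt (show (0:ℝ) ≤ 17 by norm_num) / 8

/-- For β* = (√17-3)/2, the function p₀(x) = (x(1-x))^{β*/2} satisfies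
p₀(x) = (2/(β*+1))·[x^{β*+1} ∫ₓ¹ p₀(y)/y^{β*+2} dy + (1-x)^{β*+1} ∫₀ˣ p₀(y)/(1-y)^{β*+2} dy]
for all x ∈ (0,1). -/
theorem stmt10 (x : ℝ) (hx : x ∈ Set.Ioo (0:ℝ) 1) :
    (x * (1 - x)) ^ (((Real.sqrt 17 - 3) / 2) / 2)
    = (2 / ((Real.sqrt 17 - 3) / 2 + 1))
        * (x ^ ((Real.sqrt 17 - 3) / 2 + 1)
            * (∫ y in x..1, (y * (1 - y)) ^ (((Real.sqrt 17 - 3) / 2) / 2)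
                  / y ^ ((Real.sqrt 17 - 3) / 2 + 2))
          + (1 - x) ^ ((Real.sqrt 17 - 3) / 2 + 1)
            * (∫ y in (0:ℝ)..x, (y * (1 - y)) ^ (((Real.sqrt 17 - 3) / 2) / 2)
                  / (1 - y) ^ ((Real.sqrt 17 - 3) / 2 + 2))) := by
  have hb : 0 ≤ (Real.sqrt 17 - 3) / 2 := by
    have : (3:ℝ) ≤ Real.sqrt 17 := Real.le_sqrt_of_sq_le (by norm_num)
    linarith
  rw [rpow_add_one_mul_integral_add_rpow_add_one_mul_integral hb hx.1 hx.2]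
  rw [div_mul_div_comm, sqrt_seventeen_sub_three_div_two_add_one_mul_div_two_add_one]
  ring
end

section
/- For every y ∈ (0,1), ∫₀¹ g_x(y) dx = 1, where g_x(y) = (2/(β*+1))·[x^{β*+1}/y^{β*+2}·1_{x<y} + (1-x)^{β*+1}/(1-y)^{β*+2}·1_{y<x}] and β* = (√17-3)/2. -/
open MeasureTheory intervalIntegral

/-! Each of the two pieces of the kernel integrates to `(2/(β*+1)) · 1/(β*+2)` by the power rule,
and `β*² + 3β* = 2` is exactly `(β*+1)(β*+2) = 4`, so the two halves add up to `1`. -/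

open Set in
theorem intervalIntegral.integral_ite_lt_add_ite_gt {E : Type*} [NormedAddCommGroup E]
    [NormedSpace ℝ E] {μ : Measure ℝ} [NullSingletonClass μ] {f g : ℝ → E} {a y b : ℝ}
    (hay : a ≤ y) (hyb : y ≤ b) (hf : IntervalIntegrable f μ a y)
    (hg : IntervalIntegrable g μ y b) :
    ∫ x in a..b, ((if x < y then f x else 0) + (if y < x then g x else 0)) ∂μ
      = (∫ x in a..y, f x ∂μ) + ∫ x in y..b, g x ∂μ := by
  set h : ℝ → E := fun x ↦ (if x < y then f x else 0) + (if y < x then g x else 0)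
  have hleft : EqOn f h (uIoo a y) := by
    intro x hx
    rw [uIoo_of_le hay] at hx
    simp [h, hx.2, hx.2.not_gt]
  have hright : EqOn g h (uIoo y b) := by
    intro x hx
    rw [uIoo_of_le hyb] at hx
    simp [h, hx.1, hx.1.not_gt]
  rw [← integral_add_adjacent_intervals (hf.congr_uIoo hleft) (hg.congr_uIoo hright),
    integral_congr_uIoo hleft.symm, integral_congr_uIoo hright.symm]

theorem intervalIntegral.integral_rpow_div_rpow_add_one {r y : ℝ} (hr : -1 < r) (hy : 0 < y) :
    ∫ x in (0:ℝ)..y, x ^ r / y ^ (r + 1) = 1 / (r + 1) := by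
  have hr1 : r + 1 ≠ 0 := by linarith
  rw [integral_div, integral_rpow (Or.inl hr), Real.zero_rpow hr1, sub_zero]
  field_simp [(Real.rpow_pos_of_pos hy _).ne']

theorem intervalIntegral.integral_one_sub_rpow_div_rpow_add_one {r y : ℝ} (hr : -1 < r)
    (hy : y < 1) :
    ∫ x in y..1, (1 - x) ^ r / (1 - y) ^ (r + 1) = 1 / (r + 1) := by
  rw [integral_comp_sub_left (fun x ↦ x ^ r / (1 - y) ^ (r + 1)), sub_self,
    integral_rpow_div_rpow_add_one hr (sub_pos.2 hy)]

theorem intervalIntegrable_one_sub_rpow {r a b : ℝ} (hr : -1 < r) :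
    IntervalIntegrable (fun x ↦ (1 - x) ^ r) volume a b := by
  simpa using (intervalIntegrable_rpow' hr (a := 1 - a) (b := 1 - b)).comp_sub_left 1

theorem pos_and_mul_add_one_eq_four_of_sqrt_seventeen :
    0 < (Real.sqrt 17 - 3) / 2 + 1 ∧
      ((Real.sqrt 17 - 3) / 2 + 1) * ((Real.sqrt 17 - 3) / 2 + 1 + 1) = 4 := by
  have hsq : Real.sqrt 17 ^ 2 = 17 := Real.sq_sqrt (by norm_num)
  have hgt : (4:ℝ) < Real.sqrt 17 := by nlinarith [Real.sqrt_nonneg 17]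
  constructor <;> nlinarith

/-- For β* = (√17-3)/2 and every y ∈ (0,1), ∫₀¹ g_x(y) dx = 1, where
g_x(y) = (2/(β*+1))·[x^{β*+1}/y^{β*+2}·1_{x<y} + (1-x)^{β*+1}/(1-y)^{β*+2}·1_{y<x}]. -/
theorem stmt11 (y : ℝ) (hy : y ∈ Set.Ioo (0:ℝ) 1) :
    ∫ x in (0:ℝ)..1,
      (2 / ((Real.sqrt 17 - 3) / 2 + 1))
        * ((if x < y then x ^ ((Real.sqrt 17 - 3) / 2 + 1) / y ^ ((Real.sqrt 17 - 3) / 2 + 2) else 0)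
          + (if y < x then (1 - x) ^ ((Real.sqrt 17 - 3) / 2 + 1)
                / (1 - y) ^ ((Real.sqrt 17 - 3) / 2 + 2) else 0))
    = 1 := by
  obtain ⟨hpos, hkey⟩ := pos_and_mul_add_one_eq_four_of_sqrt_seventeen
  set r := (Real.sqrt 17 - 3) / 2 + 1
  rw [show (Real.sqrt 17 - 3) / 2 + 2 = r + 1 by ring]
  have hr : -1 < r := by linarith
  rw [intervalIntegral.integral_const_mul, integral_ite_lt_add_ite_gt hy.1.le hy.2.le
      ((intervalIntegrable_rpow' hr).div_const _)
      ((intervalIntegrable_one_sub_rpow hr).div_const _),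
    integral_rpow_div_rpow_add_one hr hy.1, integral_one_sub_rpow_div_rpow_add_one hr hy.2]
  field_simp
  linarith
end

section
/- For p > 1 sufficiently close to 1, the quantity 2·(2/((β*p+1)(β*p+2)))^{1/p} · 1.15^{1/p - 1} is strictly less than 1, where β* = (√17-3)/2. -/
/-!
Taking logarithms, the inequality at `p = 1 + ε` becomes `ε · log (2 / 1.15) < log (D / 4)` with
`D = (β* p + 1)(β* p + 2)`. Since `β*² + 3β* = 2`, `D = 4 + (4 - 3β*) ε + (2 - 3β*) ε²`, so
`log (D / 4)` grows like `(1 - 3β*/4) ε ≈ 0.579 ε`, while `log (2 / 1.15) ≈ 0.553`.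
Both logarithms are estimated with `1 - 1/x ≤ log x` and the known bound on `log 2`.
-/

open Real

noncomputable def betaStar : ℝ := (√17 - 3) / 2

lemma betaStar_sq_add_three_mul : betaStar ^ 2 + 3 * betaStar = 2 := by
  have h17 : √17 ^ 2 = 17 := sq_sqrt (by norm_num)
  unfold betaStar
  linear_combination h17 / 4

lemma betaStar_mem_Ioo : betaStar ∈ Set.Ioo 0.56 0.562 := by
  have h17 : √17 ^ 2 = 17 := sq_sqrt (by norm_num)
  have hlt : √17 < 4.124 := by
    rw [sqrt_lt' (by norm_num)]
    norm_num
  have hgt : 4.12 < √17 := by nlinarith [sqrt_nonneg 17]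
  constructor <;> (unfold betaStar; linarith)

lemma two_mul_rpow_mul_rpow_lt_one_iff {p c D : ℝ} (hp : 0 < p) (hc : 0 < c) (hD : 0 < D) :
    2 * (2 / D) ^ (1 / p) * c ^ (1 / p - 1) < 1 ↔ (p - 1) * log (2 / c) < log (D / 4) := by
  have hpos : 0 < 2 * (2 / D) ^ (1 / p) * c ^ (1 / p - 1) := by positivity
  rw [← log_neg_iff hpos, log_mul (by positivity) (by positivity),
    log_mul (by norm_num) (by positivity), log_rpow (by positivity), log_rpow hc,
    log_div (by norm_num) hD.ne', log_div (by norm_num) hc.ne', log_div hD.ne' (by norm_num),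
    show (4 : ℝ) = 2 ^ 2 by norm_num, log_pow, ← mul_lt_mul_iff_of_pos_right hp]
  constructor <;> intro h <;> field_simp at h ⊢ <;> push_cast at h ⊢ <;> linarith

lemma log_two_div_one_point_one_five_lt : log (2 / 1.15) < 0.57 := by
  have hlog : 1 - (1.15 : ℝ)⁻¹ ≤ log 1.15 := one_sub_inv_le_log_of_pos (by norm_num)
  rw [log_div (by norm_num) (by norm_num)]
  norm_num at hlog
  linarith [log_two_lt_d9]

lemma mul_lt_log_betaStar_quarter {ε : ℝ} (hε : 0 < ε) (hε' : ε < 1 / 100) :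
    0.57 * ε < log ((betaStar * (1 + ε) + 1) * (betaStar * (1 + ε) + 2) / 4) := by
  obtain ⟨hβ, hβ'⟩ := betaStar_mem_Ioo
  set D := (betaStar * (1 + ε) + 1) * (betaStar * (1 + ε) + 2)
  have hD : D = 4 + (4 - 3 * betaStar) * ε + (2 - 3 * betaStar) * ε ^ 2 := by
    linear_combination (1 + ε) ^ 2 * betaStar_sq_add_three_mul
  have hDpos : 0 < D := by positivity
  have hslope : 0.57 * D < (4 - 3 * betaStar) + (2 - 3 * betaStar) * ε := by
    rw [hD]; nlinarith [mul_pos hε hε]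
  have hgrowth : 0.57 * ε * D < D - 4 := by
    have := mul_lt_mul_of_pos_left hslope hε
    rw [hD] at this ⊢; linarith
  calc 0.57 * ε < (D - 4) / D := (lt_div_iff₀ hDpos).2 hgrowth
    _ = 1 - (D / 4)⁻¹ := by field_simp
    _ ≤ log (D / 4) := one_sub_inv_le_log_of_pos (by positivity)

/-- For β* = (√17-3)/2 and p > 1 sufficiently close to 1,
2·(2/((β*p+1)(β*p+2)))^{1/p} · 1.15^{1/p - 1} < 1. -/
theorem stmt15 :
    ∃ δ > (0:ℝ), ∀ p : ℝ, 1 < p → p < 1 + δ →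
      2 * (2 / ((((Real.sqrt 17 - 3) / 2) * p + 1) * (((Real.sqrt 17 - 3) / 2) * p + 2)))
            ^ (1 / p)
        * (1.15 : ℝ) ^ (1 / p - 1) < 1 := by
  refine ⟨1 / 100, by norm_num, fun p hp hp' => ?_⟩
  obtain ⟨hβ, -⟩ := betaStar_mem_Ioo
  have hε : 0 < p - 1 := by linarith
  have hgrowth := mul_lt_log_betaStar_quarter hε (by linarith)
  rw [add_sub_cancel] at hgrowth
  change 2 * (2 / ((betaStar * p + 1) * (betaStar * p + 2))) ^ (1 / p) * _ < 1
  rw [two_mul_rpow_mul_rpow_lt_one_iff (by linarith) (by norm_num) (by positivity)]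
  calc (p - 1) * log (2 / 1.15) < (p - 1) * 0.57 :=
        mul_lt_mul_of_pos_left log_two_div_one_point_one_five_lt hε
    _ < _ := by linarith
end

section
/- The Cauchy problem f'(t) = 1 - f(t) + ∫₀¹ 2(1-m) f(mt) dm, f(0) = 0, has at most one solution among continuous functions f: [0,∞) → ℝ of at most linear growth (|f(t)| ≤ t for all t ≥ 0). -/
open MeasureTheory intervalIntegral

/-!
The difference `g = f₁ - f₂` solves the homogeneous equation `g' = -g + A g`, where
`A g t = ∫₀¹ 2(1-m) g(mt) dm` only sees `g` on `[0, t]`, with weights at most `2`.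
Starting from `|g t| ≤ 2t`, the fencing theorem turns a bound `|g t| ≤ C tᵏ` into
`|g t| ≤ 3C tᵏ⁺¹/(k+1)`; iterating gives `|g t| ≤ 2 (3t)ⁿ⁺¹ / (3 (n+1)!)`, which tends to `0`.
-/

open Set Filter Topology

noncomputable def dilationAverage (g : ℝ → ℝ) (t : ℝ) : ℝ :=
  ∫ m in (0:ℝ)..1, 2 * (1 - m) * g (m * t)

lemma intervalIntegrable_dilationAverage {g : ℝ → ℝ} (hg : ContinuousOn g (Ici 0)) {t : ℝ}
    (ht : 0 ≤ t) : IntervalIntegrable (fun m => 2 * (1 - m) * g (m * t)) volume 0 1 := by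
  refine ContinuousOn.intervalIntegrable (ContinuousOn.mul (by fun_prop) (hg.comp (by fun_prop) ?_))
  intro m hm
  rw [uIcc_of_le zero_le_one] at hm
  exact mul_nonneg hm.1 ht

lemma dilationAverage_sub {f₁ f₂ : ℝ → ℝ} (h₁ : ContinuousOn f₁ (Ici 0))
    (h₂ : ContinuousOn f₂ (Ici 0)) {t : ℝ} (ht : 0 ≤ t) :
    dilationAverage (f₁ - f₂) t = dilationAverage f₁ t - dilationAverage f₂ t := by
  rw [dilationAverage, dilationAverage, dilationAverage, ← integral_sub
    (intervalIntegrable_dilationAverage h₁ ht) (intervalIntegrable_dilationAverage h₂ ht)]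
  simp only [Pi.sub_apply, mul_sub]

lemma abs_dilationAverage_le {g : ℝ → ℝ} {t M : ℝ} (ht : 0 ≤ t)
    (hM : ∀ s ∈ Icc 0 t, |g s| ≤ M) : |dilationAverage g t| ≤ 2 * M := by
  have h := norm_integral_le_of_norm_le_const (a := 0) (b := 1)
    (f := fun m => 2 * (1 - m) * g (m * t)) (C := 2 * M) fun m hm => by
    rw [uIoc_of_le zero_le_one] at hm
    have hmt : m * t ∈ Icc 0 t := ⟨mul_nonneg hm.1.le ht, mul_le_of_le_one_left ht hm.2⟩
    rw [Real.norm_eq_abs, abs_mul, abs_of_nonneg (by linarith [hm.2] : (0:ℝ) ≤ 2 * (1 - m))]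
    exact mul_le_mul (by linarith [hm.1]) (hM _ hmt) (abs_nonneg _) zero_le_two
  simpa [dilationAverage] using h

lemma norm_le_of_norm_deriv_le_mul_pow {E : Type*} [NormedAddCommGroup E] [NormedSpace ℝ E]
    {g g' : ℝ → E} {C t : ℝ} {k : ℕ} (ht : 0 ≤ t) (hg : ContinuousOn g (Icc 0 t))
    (hg' : ∀ x ∈ Ico 0 t, HasDerivWithinAt g (g' x) (Ici x) x) (h0 : g 0 = 0)
    (bound : ∀ x ∈ Ico 0 t, ‖g' x‖ ≤ C * x ^ k) : ‖g t‖ ≤ C / (k + 1) * t ^ (k + 1) := by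
  refine image_norm_le_of_norm_deriv_right_le_deriv_boundary hg hg'
    (B := fun x => C / (k + 1) * x ^ (k + 1)) (by simp [h0])
    (fun x => ?_) bound (right_mem_Icc.2 ht)
  have hk : (k : ℝ) + 1 ≠ 0 := by positivity
  refine ((hasDerivAt_pow (k + 1) x).const_mul (C / (k + 1))).congr_deriv ?_
  rw [Nat.add_sub_cancel]
  push_cast
  field_simp

def SolvesHomogeneousEq (g : ℝ → ℝ) : Prop :=
  ∀ t, 0 ≤ t → HasDerivWithinAt g (-g t + dilationAverage g t) (Ici 0) t

lemma solvesHomogeneousEq_sub {φ f₁ f₂ : ℝ → ℝ}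
    (h₁ : ∀ t, 0 ≤ t → HasDerivWithinAt f₁ (φ t - f₁ t + dilationAverage f₁ t) (Ici 0) t)
    (h₂ : ∀ t, 0 ≤ t → HasDerivWithinAt f₂ (φ t - f₂ t + dilationAverage f₂ t) (Ici 0) t) :
    SolvesHomogeneousEq (f₁ - f₂) := by
  intro t ht
  have hc₁ : ContinuousOn f₁ (Ici 0) := fun s hs => (h₁ s hs).continuousWithinAt
  have hc₂ : ContinuousOn f₂ (Ici 0) := fun s hs => (h₂ s hs).continuousWithinAt
  refine ((h₁ t ht).sub (h₂ t ht)).congr_deriv ?_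
  rw [dilationAverage_sub hc₁ hc₂ ht, Pi.sub_apply]
  ring

namespace SolvesHomogeneousEq

variable {g : ℝ → ℝ} (hg : SolvesHomogeneousEq g)
include hg

lemma abs_le_mul_pow_succ {C : ℝ} {k : ℕ} (hC : 0 ≤ C)
    (hbound : ∀ t, 0 ≤ t → |g t| ≤ C * t ^ k) (h0 : g 0 = 0) {t : ℝ} (ht : 0 ≤ t) :
    |g t| ≤ 3 * C / (k + 1) * t ^ (k + 1) := by
  have hcont : ContinuousOn g (Icc 0 t) := fun x hx =>
    (hg x hx.1).continuousWithinAt.mono Icc_subset_Ici_self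
  refine norm_le_of_norm_deriv_le_mul_pow ht hcont
    (fun x hx => (hg x hx.1).mono (Ici_subset_Ici.2 hx.1)) h0 fun x hx => ?_
  have hx := hx.1
  have havg : |dilationAverage g x| ≤ 2 * (C * x ^ k) := abs_dilationAverage_le hx
    fun s hs => (hbound s hs.1).trans (mul_le_mul_of_nonneg_left (pow_le_pow_left₀ hs.1 hs.2 k) hC)
  calc ‖-g x + dilationAverage g x‖ ≤ |g x| + |dilationAverage g x| := by
        simpa [Real.norm_eq_abs] using abs_add_le (-g x) (dilationAverage g x)
    _ ≤ C * x ^ k + 2 * (C * x ^ k) := add_le_add (hbound x hx) havg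
    _ = 3 * C * x ^ k := by ring

lemma abs_le_pow_div_factorial {C : ℝ} (hC : 0 ≤ C) (hbound : ∀ t, 0 ≤ t → |g t| ≤ C * t)
    (n : ℕ) {t : ℝ} (ht : 0 ≤ t) : |g t| ≤ C / 3 * ((3 * t) ^ (n + 1) / (n + 1).factorial) := by
  induction n generalizing t with
  | zero =>
    refine (hbound t ht).trans_eq ?_
    simp only [zero_add, pow_one, Nat.factorial_one, Nat.cast_one, div_one]
    ring
  | succ n ih =>
    have h0 : g 0 = 0 := abs_nonpos_iff.1 (by simpa using hbound 0 le_rfl)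
    set D : ℝ := C / 3 * 3 ^ (n + 1) / (n + 1).factorial
    have ih' : ∀ s, 0 ≤ s → |g s| ≤ D * s ^ (n + 1) :=
      fun s hs => (ih hs).trans_eq (by simp only [D]; ring)
    refine (hg.abs_le_mul_pow_succ (by positivity) ih' h0 ht).trans_eq ?_
    simp only [D, Nat.factorial_succ (n + 1)]
    push_cast
    field_simp
    ring

lemma eq_zero_of_abs_le_mul {C : ℝ} (hC : 0 ≤ C) (hbound : ∀ t, 0 ≤ t → |g t| ≤ C * t)
    {t : ℝ} (ht : 0 ≤ t) : g t = 0 := by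
  have hlim : Tendsto (fun n : ℕ => C / 3 * ((3 * t) ^ (n + 1) / (n + 1).factorial))
      atTop (𝓝 0) := by
    simpa using ((tendsto_add_atTop_iff_nat 1).2
      (FloorSemiring.tendsto_pow_div_factorial_atTop (3 * t))).const_mul (C / 3)
  exact abs_nonpos_iff.1 (ge_of_tendsto' hlim fun n => hg.abs_le_pow_div_factorial hC hbound n ht)

end SolvesHomogeneousEq

theorem stmt17_general (f₁ f₂ : ℝ → ℝ)
    (h₁_growth : ∀ t : ℝ, 0 ≤ t → |f₁ t| ≤ t) (h₂_growth : ∀ t : ℝ, 0 ≤ t → |f₂ t| ≤ t)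
    (h₁_ode : ∀ t : ℝ, 0 ≤ t →
      HasDerivWithinAt f₁ (1 - f₁ t + ∫ m in (0:ℝ)..1, 2 * (1 - m) * f₁ (m * t)) (Set.Ici 0) t)
    (h₂_ode : ∀ t : ℝ, 0 ≤ t →
      HasDerivWithinAt f₂ (1 - f₂ t + ∫ m in (0:ℝ)..1, 2 * (1 - m) * f₂ (m * t)) (Set.Ici 0) t) :
    ∀ t : ℝ, 0 ≤ t → f₁ t = f₂ t := by
  have hg : SolvesHomogeneousEq (f₁ - f₂) := solvesHomogeneousEq_sub (φ := fun _ => 1) h₁_ode h₂_ode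
  have hbound : ∀ t, 0 ≤ t → |(f₁ - f₂) t| ≤ 2 * t := fun t ht =>
    (abs_sub _ _).trans (by linarith [h₁_growth t ht, h₂_growth t ht])
  exact fun t ht => sub_eq_zero.1 (hg.eq_zero_of_abs_le_mul zero_le_two hbound ht)

/-- The Cauchy problem f'(t) = 1 - f(t) + ∫₀¹ 2(1-m) f(mt) dm, f(0) = 0, has at most one
solution among continuous functions f : [0,∞) → ℝ of at most linear growth |f(t)| ≤ t. -/
theorem stmt17 (f₁ f₂ : ℝ → ℝ)
    (h₁_cont : ContinuousOn f₁ (Set.Ici 0)) (h₂_cont : ContinuousOn f₂ (Set.Ici 0))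
    (h₁_growth : ∀ t : ℝ, 0 ≤ t → |f₁ t| ≤ t) (h₂_growth : ∀ t : ℝ, 0 ≤ t → |f₂ t| ≤ t)
    (h₁0 : f₁ 0 = 0) (h₂0 : f₂ 0 = 0)
    (h₁_ode : ∀ t : ℝ, 0 ≤ t →
      HasDerivWithinAt f₁ (1 - f₁ t + ∫ m in (0:ℝ)..1, 2 * (1 - m) * f₁ (m * t)) (Set.Ici 0) t)
    (h₂_ode : ∀ t : ℝ, 0 ≤ t →
      HasDerivWithinAt f₂ (1 - f₂ t + ∫ m in (0:ℝ)..1, 2 * (1 - m) * f₂ (m * t)) (Set.Ici 0) t) :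
    ∀ t : ℝ, 0 ≤ t → f₁ t = f₂ t :=
  stmt17_general f₁ f₂ h₁_growth h₂_growth h₁_ode h₂_ode
end

section
/- Let β* = (√17-3)/2 and C₁ > 0. Suppose S: (0,1) → [0,∞) satisfies S(x) ≤ C₁/(x ∧ (1-x)) for all x, and there is a constant C₂ > 0 such that for all x ∈ (1/2,1), S(x) ≤ C₂ + (2/(β*+1))·(1-x)^{β*+1}·∫_{1/2}^x S(y)/(1-y)^{β*+2} dy. If additionally (β*+1)² > (2/0.9)/(1 - 1/90), then S(x) ≤ 100·C₂ for all x ∈ (1/2,1). -/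
/-!
Fix `x ∈ (1/2, 1)` and let `M` be the supremum of `S` on `(1/2, x]`, finite by the a priori
bound. With `b = β* + 1`, the kernel satisfies `(1 - z)^b ∫_{1/2}^z (1 - y)^{-(b+1)} dy ≤ 1/b`,
so the integral inequality gives `S ≤ C₂ + (2/b²) M` on `(1/2, x]`, hence `M ≤ C₂ + (2/b²) M`.
The hypothesis on `b` makes `2/b² ≤ 0.89`, so `M ≤ 100 C₂ / 11`.
-/

open MeasureTheory intervalIntegral Set

lemma integral_one_sub_rpow_neg_succ {a z b : ℝ} (hb : 0 < b) (ha : a < 1) (hz : z < 1) :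
    ∫ y in a..z, (1 - y) ^ (-(b + 1)) = ((1 - z) ^ (-b) - (1 - a) ^ (-b)) / b := by
  have h0 : (0 : ℝ) ∉ uIcc (1 - z) (1 - a) := by
    rw [mem_uIcc]
    rintro (h | h) <;> linarith [h.1]
  rw [integral_comp_sub_left (fun u : ℝ => u ^ (-(b + 1))) 1,
    integral_rpow (Or.inr ⟨by intro h; linarith, h0⟩), show -(b + 1) + 1 = -b by ring,
    div_neg, ← neg_div, neg_sub]

lemma rpow_mul_integral_div_one_sub_rpow_le {f : ℝ → ℝ} {a z b M : ℝ} (hb : 0 < b)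
    (haz : a ≤ z) (hz : z < 1) (hM : 0 ≤ M) (hf₀ : ∀ y ∈ Ioc a z, 0 ≤ f y)
    (hfM : ∀ y ∈ Ioc a z, f y ≤ M) :
    (1 - z) ^ b * ∫ y in a..z, f y / (1 - y) ^ (b + 1) ≤ M / b := by
  have h1z : 0 < 1 - z := by linarith
  have hcmp : ∫ y in a..z, f y / (1 - y) ^ (b + 1) ≤ ∫ y in a..z, M * (1 - y) ^ (-(b + 1)) := by
    rw [integral_of_le haz, integral_of_le haz]
    refine setIntegral_mono_of_nonneg (fun y hy => ?_) (fun y hy => ?_) ?_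
    · have : 0 < 1 - y := by linarith [hy.2]
      exact div_nonneg (hf₀ y hy) (by positivity)
    · have : 0 < 1 - y := by linarith [hy.2]
      rw [Real.rpow_neg this.le, ← div_eq_mul_inv]
      gcongr
      exact hfM y hy
    · refine (ContinuousOn.integrableOn_Icc ?_).mono_set Ioc_subset_Icc_self
      refine continuousOn_const.mul (ContinuousOn.rpow_const (by fun_prop) fun y hy => ?_)
      exact Or.inl (by linarith [hy.2])
  have hpos : 0 ≤ M / b * ((1 - z) ^ b * (1 - a) ^ (-b)) := by
    have : 0 < 1 - a := by linarith
    positivity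
  calc (1 - z) ^ b * ∫ y in a..z, f y / (1 - y) ^ (b + 1)
      ≤ (1 - z) ^ b * ∫ y in a..z, M * (1 - y) ^ (-(b + 1)) := by gcongr
    _ = M / b - M / b * ((1 - z) ^ b * (1 - a) ^ (-b)) := by
      rw [intervalIntegral.integral_const_mul,
        integral_one_sub_rpow_neg_succ hb (haz.trans_lt hz) hz, Real.rpow_neg h1z.le]
      field_simp
    _ ≤ M / b := by linarith

lemma bddAbove_image_Ioc_of_le_div_min {S : ℝ → ℝ} {C x : ℝ} (hC : 0 ≤ C) (hx : x < 1)
    (hS : ∀ y ∈ Ioo (0 : ℝ) 1, S y ≤ C / min y (1 - y)) : BddAbove (S '' Ioc (1 / 2) x) := by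
  refine ⟨C / (1 - x), ?_⟩
  rintro _ ⟨y, hy, rfl⟩
  calc S y ≤ C / min y (1 - y) := hS y ⟨by linarith [hy.1], by linarith [hy.2]⟩
    _ = C / (1 - y) := by rw [min_eq_right (by linarith [hy.1])]
    _ ≤ C / (1 - x) := div_le_div_of_nonneg_left hC (by linarith) (by linarith [hy.2])

theorem stmt18_general (S : ℝ → ℝ)
    (C₁ C₂ : ℝ) (hC₁ : 0 < C₁)
    (hS_nonneg : ∀ x ∈ Set.Ioo (0:ℝ) 1, 0 ≤ S x)
    (hS_apriori : ∀ x ∈ Set.Ioo (0:ℝ) 1, S x ≤ C₁ / min x (1 - x))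
    (hS_ineq : ∀ x ∈ Set.Ioo (1/2 : ℝ) 1,
      S x ≤ C₂ + (2 / ((Real.sqrt 17 - 3) / 2 + 1))
          * (1 - x) ^ ((Real.sqrt 17 - 3) / 2 + 1)
          * ∫ y in (1/2 : ℝ)..x, S y / (1 - y) ^ ((Real.sqrt 17 - 3) / 2 + 2))
    (hβ : ((Real.sqrt 17 - 3) / 2 + 1) ^ 2 > (2 / 0.9) / (1 - 1 / 90)) :
    ∀ x ∈ Set.Ioo (1/2 : ℝ) 1, S x ≤ 100 * C₂ := by
  rintro x ⟨hx₁, hx₂⟩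
  set b := (Real.sqrt 17 - 3) / 2 + 1 with hb_def
  have hb : 0 < b := by
    have : (3 : ℝ) < Real.sqrt 17 := by
      rw [Real.lt_sqrt (by norm_num)]; norm_num
    linarith
  have hq : 2 / b ^ 2 ≤ 89 / 100 := by
    rw [div_le_iff₀ (by positivity)]; norm_num at hβ; linarith
  have hbdd := bddAbove_image_Ioc_of_le_div_min hC₁.le hx₂ hS_apriori
  set M := sSup (S '' Ioc (1 / 2) x)
  have hSM : ∀ y ∈ Ioc (1 / 2) x, S y ≤ M := fun y hy => le_csSup hbdd ⟨y, hy, rfl⟩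
  have hM₀ : 0 ≤ M := (hS_nonneg x ⟨by linarith, hx₂⟩).trans (hSM x ⟨hx₁, le_rfl⟩)
  have hM : M ≤ C₂ + 2 / b ^ 2 * M := by
    refine csSup_le (nonempty_Ioc.mpr hx₁ |>.image S) ?_
    rintro _ ⟨z, hz, rfl⟩
    have hz₁ : z < 1 := hz.2.trans_lt hx₂
    have hkernel := rpow_mul_integral_div_one_sub_rpow_le hb hz.1.le hz₁ hM₀
      (fun y hy => hS_nonneg y ⟨by linarith [hy.1], by linarith [hy.2]⟩)
      (fun y hy => hSM y ⟨hy.1, hy.2.trans hz.2⟩)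
    calc S z ≤ C₂ + 2 / b * ((1 - z) ^ b * ∫ y in (1/2 : ℝ)..z, S y / (1 - y) ^ (b + 1)) := by
          rw [← mul_assoc, show b + 1 = (Real.sqrt 17 - 3) / 2 + 2 by rw [hb_def]; ring]
          exact hS_ineq z ⟨hz.1, hz₁⟩
      _ ≤ C₂ + 2 / b * (M / b) := by gcongr
      _ = C₂ + 2 / b ^ 2 * M := by field_simp
  linarith [mul_le_mul_of_nonneg_right hq hM₀, hSM x ⟨hx₁, le_rfl⟩]

/-- A priori bound by bootstrap: let β* = (√17-3)/2, C₁, C₂ > 0, and S : (0,1) → [0,∞)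
measurable with S(x) ≤ C₁/(x∧(1-x)), and suppose for all x ∈ (1/2,1),
S(x) ≤ C₂ + (2/(β*+1))·(1-x)^{β*+1}·∫_{1/2}^x S(y)/(1-y)^{β*+2} dy.
If (β*+1)² > (2/0.9)/(1 - 1/90), then S(x) ≤ 100·C₂ on (1/2,1). -/
theorem stmt18 (S : ℝ → ℝ) (hS_meas : Measurable S)
    (C₁ C₂ : ℝ) (hC₁ : 0 < C₁) (hC₂ : 0 < C₂)
    (hS_nonneg : ∀ x ∈ Set.Ioo (0:ℝ) 1, 0 ≤ S x)
    (hS_apriori : ∀ x ∈ Set.Ioo (0:ℝ) 1, S x ≤ C₁ / min x (1 - x))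
    (hS_ineq : ∀ x ∈ Set.Ioo (1/2 : ℝ) 1,
      S x ≤ C₂ + (2 / ((Real.sqrt 17 - 3) / 2 + 1))
          * (1 - x) ^ ((Real.sqrt 17 - 3) / 2 + 1)
          * ∫ y in (1/2 : ℝ)..x, S y / (1 - y) ^ ((Real.sqrt 17 - 3) / 2 + 2))
    (hβ : ((Real.sqrt 17 - 3) / 2 + 1) ^ 2 > (2 / 0.9) / (1 - 1 / 90)) :
    ∀ x ∈ Set.Ioo (1/2 : ℝ) 1, S x ≤ 100 * C₂ :=
  stmt18_general S C₁ C₂ hC₁ hS_nonneg hS_apriori hS_ineq hβ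
end
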